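/- arXiv:1402.2558 — 2 statements merged into one kernel-verified Lean document; each statement's English description precedes it below -/
import Mathlib

section
/- Suppose condition (B_p) holds for some p > 1 and condition (Q_∞) holds. Then there exist m < ∞ and φ > 0 such that P_{x,i}[τ ≤ m] ≥ φ for all i ∈ S and all x ∈ ℤ≥0. -/
open MeasureTheory Filter Topology Asymptotics
open scoped ENNReal NNReal

/-- A time-homogeneous Markov chain on a measurable state space `E`, encoded via the family
`P z` of laws (on trajectory space) of the chain started at `z`.  The field `markov` is the
time-homogeneous Markov property: conditionally on the event `{ω n = w}` intersected with any
event `B` depending only on the first `n+1` coordinates, the shifted trajectory has law `P w`. -/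
structure MChain (E : Type*) [MeasurableSpace E] where
  P : E → MeasureTheory.Measure (ℕ → E)
  isProb : ∀ z, MeasureTheory.IsProbabilityMeasure (P z)
  init : ∀ z, P z {ω | ω 0 = z} = 1
  markov : ∀ (z : E) (n : ℕ) (w : E) (A B : Set (ℕ → E)), MeasurableSet A →
    (∀ ω ω' : ℕ → E, (∀ k, k ≤ n → ω k = ω' k) → ω ∈ B → ω' ∈ B) →
    P z (B ∩ {ω | ω n = w} ∩ {ω | (fun k => ω (n + k)) ∈ A})
      = P z (B ∩ {ω | ω n = w}) * P w A

namespace MChain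

variable {E : Type*} [MeasurableSpace E]

/-- Irreducibility: every state can be reached from every state with positive probability. -/
def Irreducible (X : MChain E) : Prop := ∀ z w : E, ∃ n : ℕ, X.P z {ω | ω n = w} ≠ 0

/-- Recurrence: from every state, the chain returns to it almost surely. -/
def Recurrent (X : MChain E) : Prop := ∀ z : E, X.P z {ω | ∃ n, 1 ≤ n ∧ ω n = z} = 1

def Transient (X : MChain E) : Prop := ¬ X.Recurrent

/-- The first return time to `z` (with junk value `0`, via `sInf ∅ = 0`, if there is no return). -/
noncomputable def returnTime (z : E) (ω : ℕ → E) : ℕ := sInf {n | 1 ≤ n ∧ ω n = z}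

/-- Positive recurrence: recurrent, with finite mean return times. -/
def PositiveRecurrent (X : MChain E) : Prop :=
  X.Recurrent ∧ ∀ z : E, (∫⁻ ω, (returnTime z ω : ℝ≥0∞) ∂(X.P z)) ≠ ⊤

def NullRecurrent (X : MChain E) : Prop := X.Recurrent ∧ ¬ X.PositiveRecurrent

end MChain

section HalfStrip

variable {S : Type*} [Fintype S] [DecidableEq S] [Nonempty S]
  [MeasurableSpace S] [MeasurableSingletonClass S]

/-- `qhat X x i j` is the probability that the `S`-coordinate moves from `i` to `j` when the
`ℕ`-coordinate is at `x`; this is `q_x(i,j) = Σ_y p(x,i,y,j)` of the paper. -/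
noncomputable def qhat (X : MChain (ℕ × S)) (x : ℕ) (i j : S) : ℝ :=
  (X.P (x, i) {ω | (ω 1).2 = j}).toReal

/-- `stepMoment X k x i = μ_k(x,i) = E[(X_{n+1}-X_n)^k | X_n = x, η_n = i]`. -/
noncomputable def stepMoment (X : MChain (ℕ × S)) (k : ℕ) (x : ℕ) (i : S) : ℝ :=
  ∫ ω, (((ω 1).1 : ℝ) - (x : ℝ)) ^ k ∂(X.P (x, i))

/-- Condition (B_p): uniformly bounded conditional `p`-th moments of the jumps of the
`ℕ`-coordinate (by the Markov property, the conditional moment given `F_n` is a function of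
the current state only). -/
def CondB (X : MChain (ℕ × S)) (p : ℝ) : Prop :=
  ∃ C : ℝ≥0∞, C ≠ ⊤ ∧ ∀ (x : ℕ) (i : S),
    (∫⁻ ω, ENNReal.ofReal (|((ω 1).1 : ℝ) - (x : ℝ)| ^ p) ∂(X.P (x, i))) ≤ C

def IsStochasticMatrix (Q : S → S → ℝ) : Prop :=
  (∀ i j, 0 ≤ Q i j) ∧ ∀ i, (∑ j, Q i j) = 1

def IsIrreducibleMatrix (Q : S → S → ℝ) : Prop :=
  ∀ i j, ∃ n : ℕ, 0 < ((Matrix.of Q) ^ n) i j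

/-- Aperiodicity (for a finite irreducible stochastic matrix, eventual positivity of the
diagonal entries of the powers is equivalent to aperiodicity). -/
def IsAperiodicMatrix (Q : S → S → ℝ) : Prop :=
  ∀ i, ∃ N : ℕ, ∀ n, N ≤ n → 0 < ((Matrix.of Q) ^ n) i i

/-- `pst` is a (strictly positive) stationary distribution for `Q`. -/
def IsStationaryDist (Q : S → S → ℝ) (pst : S → ℝ) : Prop :=
  (∀ i, 0 < pst i) ∧ (∑ i, pst i) = 1 ∧ ∀ j, (∑ i, pst i * Q i j) = pst j

/-- Condition (Q_∞): the transition matrix of the `S`-coordinate converges as `x → ∞` to an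
irreducible stochastic matrix `Q`. -/
def CondQ (X : MChain (ℕ × S)) (Q : S → S → ℝ) : Prop :=
  (∀ i j, Tendsto (fun x : ℕ => qhat X x i j) atTop (nhds (Q i j))) ∧
    IsStochasticMatrix Q ∧ IsIrreducibleMatrix Q

/-- Condition (Q_∞^+): as (Q_∞), with a power-law rate of convergence. -/
def CondQplus (X : MChain (ℕ × S)) (Q : S → S → ℝ) : Prop :=
  (∃ δ₀ : ℝ, 0 < δ₀ ∧ ∀ i j,
      (fun x : ℕ => qhat X x i j - Q i j) =O[atTop] fun x : ℕ => (x : ℝ) ^ (-δ₀)) ∧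
    IsStochasticMatrix Q ∧ IsIrreducibleMatrix Q

/-- Condition (M_C): asymptotically constant drifts, `μ₁(x,i) = d_i + o(1)`. -/
def CondMC (X : MChain (ℕ × S)) (d : S → ℝ) : Prop :=
  ∀ i, Tendsto (fun x : ℕ => stepMoment X 1 x i) atTop (nhds (d i))

/-- Condition (M_L): Lamperti-type drifts, `μ₁(x,i) = c_i/x + o(1/x)`, `μ₂(x,i) = s_i² + o(1)`,
with at least one `s_i²` nonzero. -/
def CondML (X : MChain (ℕ × S)) (c s2 : S → ℝ) : Prop :=
  (∀ i, 0 ≤ s2 i) ∧ (∃ i, s2 i ≠ 0) ∧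
    (∀ i, Tendsto (fun x : ℕ => (x : ℝ) * stepMoment X 1 x i) atTop (nhds (c i))) ∧
    (∀ i, Tendsto (fun x : ℕ => stepMoment X 2 x i) atTop (nhds (s2 i)))

/-- Condition (M_L^+): Lamperti-type drifts with power-law error bounds. -/
def CondMLplus (X : MChain (ℕ × S)) (c s2 : S → ℝ) : Prop :=
  (∀ i, 0 ≤ s2 i) ∧ (∃ i, s2 i ≠ 0) ∧
    ∃ δ₁ : ℝ, 0 < δ₁ ∧ ∀ i,
      ((fun x : ℕ => stepMoment X 1 x i - c i / (x : ℝ)) =O[atTop]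
        fun x : ℕ => (x : ℝ) ^ (-1 - δ₁)) ∧
      ((fun x : ℕ => stepMoment X 2 x i - s2 i) =O[atTop] fun x : ℕ => (x : ℝ) ^ (-δ₁))

/-- Successive visit times `τ_0 < τ_1 < ⋯` of the `S`-coordinate to the distinguished state
`s0` (junk value, via `sInf ∅ = 0`, if there is no such visit). -/
noncomputable def tauSeq (s0 : S) (ω : ℕ → ℕ × S) : ℕ → ℕ
  | 0 => sInf {n | (ω n).2 = s0}
  | m + 1 => sInf {n | tauSeq s0 ω m < n ∧ (ω n).2 = s0}

/-- `τ`, the first positive time at which the `S`-coordinate visits `s0`. -/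
noncomputable def tauRet (s0 : S) (ω : ℕ → ℕ × S) : ℕ :=
  sInf {n | 1 ≤ n ∧ (ω n).2 = s0}

/-- `D_n`, the maximal displacement of the `ℕ`-coordinate during the `n`-th excursion. -/
noncomputable def Dexc (s0 : S) (n : ℕ) (ω : ℕ → ℕ × S) : ℕ :=
  Finset.sup (Finset.Icc (tauSeq s0 ω n) (tauSeq s0 ω (n + 1)))
    fun m => Nat.dist (ω m).1 (ω (tauSeq s0 ω n)).1

/-- `N(n) = max {k : τ_k ≤ n}`. -/
noncomputable def Ncount (s0 : S) (n : ℕ) (ω : ℕ → ℕ × S) : ℕ :=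
  sSup {k | tauSeq s0 ω k ≤ n}

end HalfStrip

/-- `Fdist a t` is the distribution function of the square root of a `Gamma(a,t)` random
variable: `F_{a,t}(x) = ∫_0^x 2 u^{2a-1} e^{-u²/t} / (t^a Γ(a)) du`. -/
noncomputable def Fdist (a t x : ℝ) : ℝ :=
  ∫ u in (0:ℝ)..x, 2 * u ^ (2 * a - 1) * Real.exp (-(u ^ 2) / t) / (t ^ a * Real.Gamma a)


/-! Far from the boundary, (Q_∞) lets the `S`-coordinate follow a `Q`-positive path to `s0` with
probability bounded below, while (B_p), through Markov's inequality, keeps the `ℕ`-coordinate from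
dropping back to where (Q_∞) gives no control; the Markov property chains these one-step bounds, so
they hold uniformly for `x ≥ x₀`. Each of the finitely many states with `x < x₀` reaches `s0`
with positive probability by irreducibility of the chain. -/

instance MChain.instIsProbabilityMeasure {E : Type*} [MeasurableSpace E] (X : MChain E) (z : E) :
    IsProbabilityMeasure (X.P z) :=
  X.isProb z

namespace MChain

variable {E : Type*} [MeasurableSpace E] (X : MChain E)

theorem measure_eq_inter_shift (z : E) (n : ℕ) (w : E) {A : Set (ℕ → E)} (hA : MeasurableSet A) :
    X.P z ({ω | ω n = w} ∩ {ω | (fun k => ω (n + k)) ∈ A}) = X.P z {ω | ω n = w} * X.P w A := by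
  simpa using X.markov z n w A Set.univ hA fun _ _ _ h => h

theorem mul_measure_le_measure_inter_shift [Countable E] [MeasurableSingletonClass E] (z : E)
    (n : ℕ) {W : Set E} {A : Set (ℕ → E)} (hA : MeasurableSet A) {c : ℝ≥0∞}
    (hc : ∀ w ∈ W, c ≤ X.P w A) :
    c * X.P z {ω | ω n ∈ W} ≤ X.P z ({ω | ω n ∈ W} ∩ {ω | (fun k => ω (n + k)) ∈ A}) := by
  have hfiber : ∀ w, MeasurableSet {ω : ℕ → E | ω n = w} := fun w =>
    (measurableSet_singleton w).preimage (measurable_pi_apply n)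
  have hsum : ∀ μ : Measure (ℕ → E), ∑' w : W, μ {ω | ω n = w} = μ {ω | ω n ∈ W} := fun _ =>
    tsum_measure_preimage_singleton W.to_countable fun w _ => hfiber w
  calc c * X.P z {ω | ω n ∈ W} = ∑' w : W, c * X.P z {ω | ω n = w} := by
        rw [ENNReal.tsum_mul_left, hsum]
    _ ≤ ∑' w : W, X.P z {ω | ω n = w} * X.P w A :=
        ENNReal.tsum_le_tsum fun w => by rw [mul_comm]; gcongr; exact hc w w.2
    _ = ∑' w : W, (X.P z).restrict {ω | (fun k => ω (n + k)) ∈ A} {ω | ω n = w} := by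
        simp only [Measure.restrict_apply (hfiber _), measure_eq_inter_shift X z n _ hA]
    _ = X.P z ({ω | ω n ∈ W} ∩ {ω | (fun k => ω (n + k)) ∈ A}) := by
        rw [hsum]
        exact Measure.restrict_apply (W.to_countable.measurableSet.preimage (measurable_pi_apply n))

end MChain

theorem Finset.exists_pos_forall_le {ι : Type*} (s : Finset ι) {g : ι → ℕ → ℝ≥0∞}
    (hg : ∀ i, Monotone (g i)) (h : ∀ i ∈ s, ∃ m, 0 < g i m) :
    ∃ m, ∃ φ > 0, ∀ i ∈ s, φ ≤ g i m := by
  choose! m hm using h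
  exact ⟨s.sup m, s.inf fun i => g i (s.sup m),
    (Finset.lt_inf_iff ENNReal.zero_lt_top).2 fun i hi =>
      (hm i hi).trans_le (hg i (Finset.le_sup hi)),
    fun i hi => Finset.inf_le hi⟩

theorem Finset.exists_pos_eventually_forall_le {ι α : Type*} (s : Finset ι) {l : Filter α}
    {g : ι → ℕ → α → ℝ≥0∞} (hg : ∀ i x, Monotone fun m => g i m x)
    (h : ∀ i ∈ s, ∃ m, ∃ φ > 0, ∀ᶠ x in l, φ ≤ g i m x) :
    ∃ m, ∃ φ > 0, ∀ᶠ x in l, ∀ i ∈ s, φ ≤ g i m x := by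
  choose! m φ hφ hev using h
  refine ⟨s.sup m, s.inf φ, (Finset.lt_inf_iff ENNReal.zero_lt_top).2 hφ, ?_⟩
  filter_upwards [(eventually_all_finset s).2 hev] with x hx i hi
  exact (Finset.inf_le hi).trans ((hx i hi).trans (hg i x (Finset.le_sup hi)))

section HalfStrip

variable {S : Type*}

def visitsWithin (s0 : S) (m : ℕ) : Set (ℕ → ℕ × S) :=
  {ω | ∃ n, 1 ≤ n ∧ n ≤ m ∧ (ω n).2 = s0}

theorem visitsWithin_mono (s0 : S) : Monotone (visitsWithin s0) :=
  fun _ _ hm _ ⟨n, h1, hn, hs⟩ => ⟨n, h1, hn.trans hm, hs⟩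

variable [MeasurableSpace S] {X : MChain (ℕ × S)}

theorem measurableSet_snd_eval_eq [MeasurableSingletonClass S] (n : ℕ) (j : S) :
    MeasurableSet {ω : ℕ → ℕ × S | (ω n).2 = j} :=
  (measurable_pi_apply n).snd (measurableSet_singleton j)

theorem MChain.Irreducible.exists_measure_visitsWithin_pos [MeasurableSingletonClass S]
    (hirr : X.Irreducible) (s0 : S) (z : ℕ × S) : ∃ m, 0 < X.P z (visitsWithin s0 m) := by
  -- aiming at a state `≠ z` forces the hitting time to be positive
  obtain ⟨n, hn⟩ := hirr z (z.1 + 1, s0)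
  have hn0 : n ≠ 0 := by
    rintro rfl
    have hstart : X.P z {ω | ω 0 = z}ᶜ = 0 :=
      (prob_compl_eq_zero_iff ((measurableSet_singleton z).preimage (measurable_pi_apply 0))).2
        (X.init z)
    refine hn (measure_mono_null ?_ hstart)
    intro ω (hω : ω 0 = _) (h : ω 0 = z)
    simp [h, Prod.ext_iff] at hω
  exact ⟨n, (pos_iff_ne_zero.2 hn).trans_le
    (measure_mono fun ω (hω : ω n = _) => ⟨n, Nat.one_le_iff_ne_zero.2 hn0, le_rfl, by rw [hω]⟩)⟩

theorem CondB.exists_measure_jump_down_le {p : ℝ} (hB : CondB X p) (hp : 0 < p) {δ : ℝ≥0∞}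
    (hδ : 0 < δ) : ∃ T : ℕ, ∀ (x : ℕ) (i : S), X.P (x, i) {ω | (ω 1).1 + T ≤ x} ≤ δ := by
  obtain ⟨C, hC, hCbound⟩ := hB
  have hmarkov : ∀ (T x : ℕ) (i : S),
      ENNReal.ofReal ((T : ℝ) ^ p) * X.P (x, i) {ω | (ω 1).1 + T ≤ x} ≤ C := by
    intro T x i
    refine le_trans ?_
      ((mul_meas_ge_le_lintegral₀ ?_ (ENNReal.ofReal ((T : ℝ) ^ p))).trans (hCbound x i))
    refine mul_le_mul_right (measure_mono fun ω hω => ?_) _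
    replace hω : (ω 1).1 + T ≤ x := hω
    have hω' : ((ω 1).1 : ℝ) + T ≤ x := by exact_mod_cast hω
    show ENNReal.ofReal _ ≤ ENNReal.ofReal _
    gcongr
    rw [abs_sub_comm]
    exact le_abs.2 (Or.inl (by linarith))
    exact ((measurable_of_countable fun y : ℕ => ENNReal.ofReal (|(y : ℝ) - x| ^ p)).comp
      (measurable_fst.comp (measurable_pi_apply 1))).aemeasurable
  have hlim : Tendsto (fun T : ℕ => C / ENNReal.ofReal ((T : ℝ) ^ p)) atTop (𝓝 0) := by
    simpa using ENNReal.Tendsto.const_div (ENNReal.tendsto_ofReal_atTop.comp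
      ((tendsto_rpow_atTop hp).comp tendsto_natCast_atTop_atTop)) (Or.inr hC)
  obtain ⟨T, hT, hT1⟩ := ((hlim.eventually (gt_mem_nhds hδ)).and (eventually_ge_atTop 1)).exists
  have hTp : ENNReal.ofReal ((T : ℝ) ^ p) ≠ 0 :=
    (ENNReal.ofReal_pos.2 (Real.rpow_pos_of_pos (by exact_mod_cast hT1) p)).ne'
  refine ⟨T, fun x i => le_trans ?_ hT.le⟩
  rw [ENNReal.le_div_iff_mul_le (Or.inl hTp) (Or.inl ENNReal.ofReal_ne_top), mul_comm]
  exact hmarkov T x i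

variable [Fintype S] [DecidableEq S] {p : ℝ} {Q : S → S → ℝ}

theorem eventually_ofReal_le_measure_step_mem_Ici_prod (hp : 0 < p) (hB : CondB X p)
    (hQ : CondQ X Q) {i k : S} {c : ℝ} (hc : c < Q i k) (Y : ℕ) :
    ∀ᶠ x in atTop, ENNReal.ofReal c ≤ X.P (x, i) {ω | ω 1 ∈ Set.Ici Y ×ˢ {k}} := by
  set δ := (Q i k - c) / 2 with hδ_def
  have hδ : 0 < δ := half_pos (sub_pos.2 hc)
  obtain ⟨T, hT⟩ := hB.exists_measure_jump_down_le hp (ENNReal.ofReal_pos.2 hδ)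
  filter_upwards [(hQ.1 i k).eventually (lt_mem_nhds (by linarith [hδ_def] : c + δ < Q i k)),
    eventually_ge_atTop (Y + T)] with x hq hx
  have hsplit : {ω : ℕ → ℕ × S | (ω 1).2 = k}
      ⊆ {ω | ω 1 ∈ Set.Ici Y ×ˢ {k}} ∪ {ω | (ω 1).1 + T ≤ x} := by
    intro ω (hω : (ω 1).2 = k)
    by_cases hY : Y ≤ (ω 1).1
    · exact Or.inl ⟨hY, hω⟩
    · exact Or.inr (by simp only [Set.mem_ofPred_eq]; omega)
  have hqhat : ENNReal.ofReal (qhat X x i k) = X.P (x, i) {ω | (ω 1).2 = k} :=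
    ENNReal.ofReal_toReal (measure_ne_top _ _)
  rw [← add_sub_cancel_right c δ, ENNReal.ofReal_sub _ hδ.le, tsub_le_iff_right]
  calc ENNReal.ofReal (c + δ) ≤ ENNReal.ofReal (qhat X x i k) := ENNReal.ofReal_le_ofReal hq.le
    _ ≤ _ := hqhat ▸ (measure_mono hsplit).trans (measure_union_le _ _)
    _ ≤ _ := by gcongr; exact hT x i

variable [MeasurableSingletonClass S]

theorem exists_eventually_le_measure_shift (hp : 0 < p) (hB : CondB X p) (hQ : CondQ X Q)
    {i k : S} (hik : 0 < Q i k) {A : Set (ℕ → ℕ × S)} (hA : MeasurableSet A) {φ : ℝ≥0∞}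
    (hφ : 0 < φ) (h : ∀ᶠ y in atTop, φ ≤ X.P (y, k) A) :
    ∃ ψ > 0, ∀ᶠ x in atTop, ψ ≤ X.P (x, i) {ω | (fun n => ω (1 + n)) ∈ A} := by
  obtain ⟨Y, hY⟩ := eventually_atTop.1 h
  refine ⟨φ * ENNReal.ofReal (Q i k / 2),
    ENNReal.mul_pos hφ.ne' (ENNReal.ofReal_pos.2 (half_pos hik)).ne', ?_⟩
  filter_upwards [eventually_ofReal_le_measure_step_mem_Ici_prod hp hB hQ (half_lt_self hik) Y]
    with x hx
  calc φ * ENNReal.ofReal (Q i k / 2) ≤ φ * X.P (x, i) {ω | ω 1 ∈ Set.Ici Y ×ˢ {k}} := by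
        gcongr
    _ ≤ _ := X.mul_measure_le_measure_inter_shift _ 1 hA (by rintro ⟨y, _⟩ ⟨hy, rfl⟩; exact hY y hy)
    _ ≤ _ := measure_mono Set.inter_subset_right

theorem exists_eventually_le_measure_snd_eq_of_pow_pos (hp : 0 < p) (hB : CondB X p)
    (hQ : CondQ X Q) {n : ℕ} {i j : S} (h : 0 < (Matrix.of Q ^ n) i j) :
    ∃ φ > 0, ∀ᶠ x in atTop, φ ≤ X.P (x, i) {ω | (ω n).2 = j} := by
  induction n generalizing i with
  | zero =>
    obtain rfl : i = j := by_contra fun hij => by simp [Matrix.one_apply_ne hij] at h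
    refine ⟨1, one_pos, .of_forall fun x => ?_⟩
    rw [← X.init (x, i)]
    exact measure_mono fun ω (hω : ω 0 = (x, i)) => by simp [hω]
  | succ n ih =>
    rw [pow_succ', Matrix.mul_apply] at h
    obtain ⟨k, -, hk⟩ : ∃ k ∈ Finset.univ, 0 < Q i k * (Matrix.of Q ^ n) k j :=
      Finset.exists_lt_of_sum_lt (by simpa using h)
    have hik : 0 < Q i k := (hQ.2.1.1 i k).lt_of_ne fun h0 => by simp [← h0] at hk
    obtain ⟨φ, hφ, hev⟩ := ih (pos_of_mul_pos_right hk (hQ.2.1.1 i k))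
    obtain ⟨ψ, hψ, hev'⟩ :=
      exists_eventually_le_measure_shift hp hB hQ hik (measurableSet_snd_eval_eq n j) hφ hev
    exact ⟨ψ, hψ, hev'.mono fun x hx => hx.trans_eq (by rw [add_comm]; rfl)⟩

theorem exists_eventually_le_measure_visitsWithin (hp : 0 < p) (hB : CondB X p)
    (hQ : CondQ X Q) (s0 i : S) :
    ∃ m, ∃ φ > 0, ∀ᶠ x in atTop, φ ≤ X.P (x, i) (visitsWithin s0 m) := by
  obtain ⟨k, -, hik⟩ : ∃ k ∈ Finset.univ, (0 : ℝ) < Q i k :=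
    Finset.exists_lt_of_sum_lt (by simp [hQ.2.1.2 i])
  obtain ⟨n, hn⟩ := hQ.2.2 k s0
  obtain ⟨φ, hφ, hev⟩ := exists_eventually_le_measure_snd_eq_of_pow_pos hp hB hQ hn
  obtain ⟨ψ, hψ, hev'⟩ :=
    exists_eventually_le_measure_shift hp hB hQ hik (measurableSet_snd_eval_eq n s0) hφ hev
  exact ⟨1 + n, ψ, hψ, hev'.mono fun x hx =>
    hx.trans (measure_mono fun ω hω => ⟨1 + n, Nat.le_add_right 1 n, le_rfl, hω⟩)⟩

end HalfStrip

variable {S : Type*} [Fintype S] [DecidableEq S] [Nonempty S]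
  [MeasurableSpace S] [MeasurableSingletonClass S]

theorem stmt8_general (X : MChain (ℕ × S)) (hirr : X.Irreducible) (s0 : S)
    (p : ℝ) (hp : 1 < p) (hB : CondB X p)
    (Q : S → S → ℝ) (hQ : CondQ X Q) :
    ∃ (m : ℕ) (φ : ℝ), 0 < φ ∧ ∀ (x : ℕ) (i : S),
      ENNReal.ofReal φ ≤ X.P (x, i) {ω | ∃ n, 1 ≤ n ∧ n ≤ m ∧ (ω n).2 = s0} := by
  have hmono : ∀ z, Monotone fun m => X.P z (visitsWithin s0 m) :=
    fun z _ _ h => measure_mono (visitsWithin_mono s0 h)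
  obtain ⟨m₁, φ₁, hφ₁, hfar⟩ := Finset.univ.exists_pos_eventually_forall_le
    (fun i x => hmono (x, i)) fun i _ =>
      exists_eventually_le_measure_visitsWithin (zero_lt_one.trans hp) hB hQ s0 i
  obtain ⟨x₀, hx₀⟩ := eventually_atTop.1 hfar
  obtain ⟨m₂, φ₂, hφ₂, hnear⟩ := (Finset.range x₀ ×ˢ Finset.univ).exists_pos_forall_le hmono
    fun z _ => hirr.exists_measure_visitsWithin_pos s0 z
  have hbound : ∀ x i, min φ₁ φ₂ ≤ X.P (x, i) (visitsWithin s0 (max m₁ m₂)) := by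
    intro x i
    rcases le_or_gt x₀ x with hx | hx
    · exact (min_le_left _ _).trans
        ((hx₀ x hx i (Finset.mem_univ i)).trans (hmono _ (le_max_left _ _)))
    · exact (min_le_right _ _).trans
        ((hnear (x, i) (by simp [hx])).trans (hmono _ (le_max_right _ _)))
  have hfin : min φ₁ φ₂ ≠ ⊤ :=
    ne_top_of_le_ne_top ENNReal.one_ne_top ((hbound 0 (Classical.arbitrary S)).trans prob_le_one)
  exact ⟨max m₁ m₂, (min φ₁ φ₂).toReal, ENNReal.toReal_pos (lt_min hφ₁ hφ₂).ne' hfin,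
    fun x i => (ENNReal.ofReal_toReal hfin).trans_le (hbound x i)⟩

/-- Lemma (uniform irreducibility): under (B_p) for some `p > 1` and (Q_∞), there exist
`m < ∞` and `φ > 0` such that `P_{x,i}[τ ≤ m] ≥ φ` for all `x` and `i`, where `τ` is the
first positive time the `S`-coordinate visits the distinguished state `s0`. -/
theorem stmt8 (X : MChain (ℕ × S)) (hirr : X.Irreducible) (s0 : S)
    (p : ℝ) (hp : 1 < p) (hB : CondB X p)
    (Q : S → S → ℝ) (pst : S → ℝ) (hQ : CondQ X Q) (hpst : IsStationaryDist Q pst) :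
    ∃ (m : ℕ) (φ : ℝ), 0 < φ ∧ ∀ (x : ℕ) (i : S),
      ENNReal.ofReal φ ≤ X.P (x, i) {ω | ∃ n, 1 ≤ n ∧ n ≤ m ∧ (ω n).2 = s0} :=
  stmt8_general X hirr s0 p hp hB Q hQ
end

section
/- Suppose condition (B_p) holds for some p > 1 and condition (Q_∞) holds. Then there exist constants c > 0 and C < ∞ such that, for all x ∈ ℤ≥0, all n ∈ ℤ≥0, and all r ≥ 0, P[τ_{n+1} − τ_n > r | X_{τ_n} = x] ≤ C e^{−cr}; moreover P_{x,i}[τ > r] ≤ C e^{−cr} for all x and all i ∈ S. -/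
/-!
From every state, the `S`-coordinate visits `s0` within a fixed number `k` of steps with
probability bounded below uniformly. Far from the boundary this comes from (Q_∞): by (B_p) and
Markov's inequality the `ℕ`-coordinate moves by a bounded amount per step with high probability,
so the `S`-coordinate follows, with probability bounded below, a path along which the irreducible
limit matrix `Q` is positive. Near the boundary only finitely many states remain, and each reaches
`s0` by irreducibility of the chain.

The Markov property at times `k, 2k, …` then bounds the probability of avoiding `s0` for `jk`
steps by `a ^ j` with `a < 1`, which is the exponential tail of `τ`. In particular `s0` is visited
infinitely often almost surely, and splitting according to the time of the `n`-th visit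
transfers the bound to each excursion `τ_{n+1} - τ_n`.
-/

open MeasureTheory Filter Topology Asymptotics
open scoped ENNReal NNReal

open Set

section Markov

variable {E : Type*} [MeasurableSpace E]

def DeterminedUpTo (t : ℕ) (B : Set (ℕ → E)) : Prop :=
  ∀ ω ω' : ℕ → E, (∀ k, k ≤ t → ω k = ω' k) → ω ∈ B → ω' ∈ B

theorem DeterminedUpTo.measurableSet [Countable E] [MeasurableSingletonClass E] {t : ℕ}
    {B : Set (ℕ → E)} (hB : DeterminedUpTo t B) : MeasurableSet B := by
  set π : (ℕ → E) → Fin (t + 1) → E := fun ω k => ω k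
  have hπ : Measurable π := measurable_pi_lambda _ fun k => measurable_pi_apply _
  have hB' : B = π ⁻¹' (π '' B) := by
    refine (subset_preimage_image π B).antisymm ?_
    rintro ω ⟨ω', hω', h⟩
    exact hB ω' ω (fun k hk => by simpa [π] using congrFun h ⟨k, by omega⟩) hω'
  rw [hB']
  exact hπ MeasurableSet.of_discrete

theorem measurableSet_coord_eq [MeasurableSingletonClass E] (t : ℕ) (w : E) :
    MeasurableSet {ω : ℕ → E | ω t = w} :=
  (measurableSet_singleton w).preimage (measurable_pi_apply t)

theorem measurableSet_shift_preimage (t : ℕ) {A : Set (ℕ → E)} (hA : MeasurableSet A) :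
    MeasurableSet {ω : ℕ → E | (fun k => ω (t + k)) ∈ A} :=
  (measurable_pi_lambda _ fun k => measurable_pi_apply (t + k)) hA

namespace MChain

variable (X : MChain E) [Countable E] [MeasurableSingletonClass E]

theorem tsum_measure_inter_eq (z : E) {B : Set (ℕ → E)} (hB : MeasurableSet B) (t : ℕ)
    (W : Set E) :
    ∑' w : W, X.P z (B ∩ {ω | ω t = w}) = X.P z (B ∩ {ω | ω t ∈ W}) := by
  rw [← measure_iUnion]
  · congr 1
    ext ω
    simp
  · intro w w' hww'
    exact disjoint_left.mpr fun ω h h' => hww' (Subtype.ext (h.2.symm.trans h'.2))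
  · exact fun w => hB.inter (measurableSet_coord_eq t (w : E))

theorem measure_inter_shift_eq_tsum (z : E) {t : ℕ} {B : Set (ℕ → E)}
    (hB : DeterminedUpTo t B) (W : Set E) {A : Set (ℕ → E)} (hA : MeasurableSet A) :
    X.P z (B ∩ {ω | ω t ∈ W} ∩ {ω | (fun k => ω (t + k)) ∈ A})
      = ∑' w : W, X.P z (B ∩ {ω | ω t = w}) * X.P w A := by
  have hunion : B ∩ {ω | ω t ∈ W} ∩ {ω | (fun k => ω (t + k)) ∈ A}
      = ⋃ w : W, B ∩ {ω | ω t = w} ∩ {ω | (fun k => ω (t + k)) ∈ A} := by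
    ext ω
    simp [and_assoc]
  rw [hunion, measure_iUnion]
  · exact tsum_congr fun w => X.markov z t w A B hA hB
  · intro w w' hww'
    exact disjoint_left.mpr fun ω h h' => hww' (Subtype.ext (h.1.2.symm.trans h'.1.2))
  · exact fun w => (hB.measurableSet.inter (measurableSet_coord_eq t (w : E))).inter
      (measurableSet_shift_preimage t hA)

theorem measure_inter_shift_le (z : E) {t : ℕ} {B : Set (ℕ → E)} (hB : DeterminedUpTo t B)
    (W : Set E) {A : Set (ℕ → E)} (hA : MeasurableSet A) {b : ℝ≥0∞}
    (hb : ∀ w ∈ W, X.P w A ≤ b) :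
    X.P z (B ∩ {ω | ω t ∈ W} ∩ {ω | (fun k => ω (t + k)) ∈ A})
      ≤ b * X.P z (B ∩ {ω | ω t ∈ W}) := by
  rw [X.measure_inter_shift_eq_tsum z hB W hA, ← X.tsum_measure_inter_eq z hB.measurableSet,
    ← ENNReal.tsum_mul_left]
  exact ENNReal.tsum_le_tsum fun w => by rw [mul_comm]; gcongr; exact hb w w.2

theorem le_measure_inter_shift (z : E) {t : ℕ} {B : Set (ℕ → E)} (hB : DeterminedUpTo t B)
    (W : Set E) {A : Set (ℕ → E)} (hA : MeasurableSet A) {b : ℝ≥0∞}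
    (hb : ∀ w ∈ W, b ≤ X.P w A) :
    b * X.P z (B ∩ {ω | ω t ∈ W})
      ≤ X.P z (B ∩ {ω | ω t ∈ W} ∩ {ω | (fun k => ω (t + k)) ∈ A}) := by
  rw [X.measure_inter_shift_eq_tsum z hB W hA, ← X.tsum_measure_inter_eq z hB.measurableSet,
    ← ENNReal.tsum_mul_left]
  exact ENNReal.tsum_le_tsum fun w => by rw [mul_comm]; gcongr; exact hb w w.2

theorem measure_shift_le (z : E) (t : ℕ) {A : Set (ℕ → E)} (hA : MeasurableSet A)
    {b : ℝ≥0∞} (hb : ∀ w, X.P w A ≤ b) :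
    X.P z {ω | (fun k => ω (t + k)) ∈ A} ≤ b := by
  have := X.isProb z
  calc X.P z {ω | (fun k => ω (t + k)) ∈ A}
      = X.P z (univ ∩ {ω | ω t ∈ univ} ∩ {ω | (fun k => ω (t + k)) ∈ A}) := by simp
    _ ≤ b * X.P z (univ ∩ {ω | ω t ∈ univ}) :=
      X.measure_inter_shift_le z (fun _ _ _ h => h) univ hA fun w _ => hb w
    _ ≤ b := mul_le_of_le_one_right' prob_le_one

omit [Countable E] in
theorem ae_eq_init (z : E) : ∀ᵐ ω ∂X.P z, ω 0 = z := by
  have := X.isProb z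
  exact mem_ae_iff.mpr ((prob_compl_eq_zero_iff (measurableSet_coord_eq 0 z)).mpr (X.init z))

end MChain

end Markov

section Reach

variable {S : Type*} [MeasurableSpace S] [MeasurableSingletonClass S] {X : MChain (ℕ × S)}

theorem measurableSet_snd_eq (m : ℕ) (j : S) :
    MeasurableSet {ω : ℕ → ℕ × S | (ω m).2 = j} :=
  (measurableSet_singleton j).preimage (measurable_snd.comp (measurable_pi_apply m))

theorem CondB.exists_measure_jump_ge_le [Countable S] {p : ℝ} (hB : CondB X p) (hp : 0 < p)
    {δ : ℝ} (hδ : 0 < δ) :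
    ∃ M : ℝ, ∀ (x : ℕ) (i : S),
      X.P (x, i) {ω | M ≤ |((ω 1).1 : ℝ) - x|} ≤ ENNReal.ofReal δ := by
  obtain ⟨C, hC, hCb⟩ := hB
  set y := C.toReal / δ + 1
  have hy : 0 < y := by positivity
  have hy' : ENNReal.ofReal y ≠ 0 := by simpa using hy
  refine ⟨y ^ p⁻¹, fun x i => ?_⟩
  set f : (ℕ → ℕ × S) → ℝ≥0∞ := fun ω => ENNReal.ofReal (|((ω 1).1 : ℝ) - x| ^ p)
  have hf : Measurable f :=
    (Measurable.of_discrete (f := fun w : ℕ × S => ENNReal.ofReal (|(w.1 : ℝ) - x| ^ p))).comp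
      (measurable_pi_apply 1)
  calc X.P (x, i) {ω | y ^ p⁻¹ ≤ |((ω 1).1 : ℝ) - x|}
      ≤ X.P (x, i) {ω | ENNReal.ofReal y ≤ f ω} := by
        refine measure_mono fun ω hω => ENNReal.ofReal_le_ofReal ?_
        have := Real.rpow_le_rpow (by positivity) hω hp.le
        rwa [Real.rpow_inv_rpow hy.le hp.ne'] at this
    _ ≤ (∫⁻ ω, f ω ∂X.P (x, i)) / ENNReal.ofReal y :=
        meas_ge_le_lintegral_div hf.aemeasurable hy' ENNReal.ofReal_ne_top
    _ ≤ C / ENNReal.ofReal y := by gcongr; exact hCb x i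
    _ ≤ ENNReal.ofReal δ := by
        rw [ENNReal.div_le_iff hy' ENNReal.ofReal_ne_top, ← ENNReal.ofReal_mul hδ.le,
          ← ENNReal.ofReal_toReal hC]
        refine ENNReal.ofReal_le_ofReal ?_
        rw [mul_add, mul_div_cancel₀ _ hδ.ne']
        linarith

theorem eventually_le_measure_far_step [Countable S] {p : ℝ} (hB : CondB X p) (hp : 0 < p)
    {i l : S} {q : ℝ} (hq : Tendsto (fun x => qhat X x i l) atTop (𝓝 q)) (hq0 : 0 < q)
    (N : ℕ) :
    ∀ᶠ x in atTop, ENNReal.ofReal (q / 3)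
      ≤ X.P (x, i) {ω | ω 1 ∈ {w : ℕ × S | N ≤ w.1 ∧ w.2 = l}} := by
  obtain ⟨M, hM⟩ := hB.exists_measure_jump_ge_le hp (by positivity : 0 < q / 3)
  filter_upwards [hq.eventually (lt_mem_nhds (by linarith : 2 * (q / 3) < q)),
    eventually_ge_atTop (N + ⌈M⌉₊)] with x hqx hx
  have hsplit : {ω : ℕ → ℕ × S | (ω 1).2 = l} ⊆
      {ω | ω 1 ∈ {w : ℕ × S | N ≤ w.1 ∧ w.2 = l}} ∪
        {ω | M ≤ |((ω 1).1 : ℝ) - x|} := by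
    intro ω hω
    by_cases hN : N ≤ (ω 1).1
    · exact Or.inl ⟨hN, hω⟩
    · have hfar : ((ω 1).1 : ℝ) + ⌈M⌉₊ ≤ x := by
        exact_mod_cast (by omega : (ω 1).1 + ⌈M⌉₊ ≤ x)
      refine Or.inr (show M ≤ |((ω 1).1 : ℝ) - x| from le_abs.mpr (Or.inr ?_))
      linarith [Nat.le_ceil M]
  have h2q : ENNReal.ofReal (2 * (q / 3)) ≤ X.P (x, i) {ω | (ω 1).2 = l} :=
    ENNReal.ofReal_le_of_le_toReal hqx.le
  calc ENNReal.ofReal (q / 3)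
      = ENNReal.ofReal (2 * (q / 3)) - ENNReal.ofReal (q / 3) := by
        rw [← ENNReal.ofReal_sub _ (by positivity)]; ring_nf
    _ ≤ X.P (x, i) {ω | (ω 1).2 = l} - X.P (x, i) {ω | M ≤ |((ω 1).1 : ℝ) - x|} :=
        tsub_le_tsub h2q (hM x i)
    _ ≤ X.P (x, i) {ω | ω 1 ∈ {w : ℕ × S | N ≤ w.1 ∧ w.2 = l}} :=
        tsub_le_iff_right.mpr ((measure_mono hsplit).trans (measure_union_le _ _))

theorem exists_eventually_le_measure_succ [Countable S] {p : ℝ} (hB : CondB X p) (hp : 0 < p)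
    {i l j : S} {q : ℝ} (hq : Tendsto (fun x => qhat X x i l) atTop (𝓝 q)) (hq0 : 0 < q)
    {m : ℕ}
    (h : ∃ c ≠ 0, ∀ᶠ y in atTop, c ≤ X.P (y, l) {ω | (ω m).2 = j}) :
    ∃ c ≠ 0, ∀ᶠ x in atTop, c ≤ X.P (x, i) {ω | (ω (m + 1)).2 = j} := by
  obtain ⟨c, hc, hev⟩ := h
  obtain ⟨N, hN⟩ := eventually_atTop.mp hev
  set W := {w : ℕ × S | N ≤ w.1 ∧ w.2 = l}
  refine ⟨c * ENNReal.ofReal (q / 3), mul_ne_zero hc (by simpa using hq0), ?_⟩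
  filter_upwards [eventually_le_measure_far_step hB hp hq hq0 N] with x hx
  calc c * ENNReal.ofReal (q / 3) ≤ c * X.P (x, i) (univ ∩ {ω | ω 1 ∈ W}) := by
        rw [univ_inter]; gcongr; exact hx
    _ ≤ X.P (x, i)
          (univ ∩ {ω | ω 1 ∈ W} ∩ {ω | (fun k => ω (1 + k)) ∈ {ω | (ω m).2 = j}}) :=
        X.le_measure_inter_shift _ (fun _ _ _ h => h) W (measurableSet_snd_eq m j)
          fun ⟨y, l'⟩ ⟨hy, (hl' : l' = l)⟩ => hl' ▸ hN y hy
    _ ≤ X.P (x, i) {ω | (ω (m + 1)).2 = j} :=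
        measure_mono fun ω hω => by simpa [add_comm] using hω.2

theorem exists_eventually_le_measure_of_pow_ne_zero [Fintype S] [DecidableEq S] {p : ℝ}
    (hB : CondB X p) (hp : 0 < p) {Q : S → S → ℝ} (hQ : CondQ X Q) :
    ∀ (m : ℕ) (i j : S), (Matrix.of Q ^ m) i j ≠ 0 →
      ∃ c ≠ 0, ∀ᶠ x in atTop, c ≤ X.P (x, i) {ω | (ω m).2 = j}
  | 0, i, j, h => by
    obtain rfl : i = j := by
      by_contra hij
      simp [Matrix.one_apply_ne hij] at h
    refine ⟨1, one_ne_zero, Eventually.of_forall fun x => ?_⟩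
    rw [← X.init (x, i)]
    exact measure_mono fun ω (hω : ω 0 = (x, i)) => by simp [hω]
  | m + 1, i, j, h => by
    rw [pow_succ', Matrix.mul_apply] at h
    obtain ⟨l, -, hl⟩ := Finset.exists_ne_zero_of_sum_ne_zero h
    have hQil : 0 < Q i l := (hQ.2.1.1 i l).lt_of_ne (left_ne_zero_of_mul hl).symm
    exact exists_eventually_le_measure_succ hB hp (hQ.1 i l) hQil
      (exists_eventually_le_measure_of_pow_ne_zero hB hp hQ m l j (right_ne_zero_of_mul hl))

theorem exists_eventually_le_measure_hit [Fintype S] [DecidableEq S] {p : ℝ}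
    (hB : CondB X p) (hp : 0 < p) {Q : S → S → ℝ} (hQ : CondQ X Q) (i s0 : S) :
    ∃ m, ∃ c ≠ 0, ∀ᶠ x in atTop, c ≤ X.P (x, i) {ω | (ω (m + 1)).2 = s0} := by
  obtain ⟨l, -, hl⟩ : ∃ l ∈ Finset.univ, 0 < Q i l :=
    Finset.exists_lt_of_sum_lt (by simp [hQ.2.1.2 i])
  obtain ⟨n, hn⟩ := hQ.2.2 l s0
  exact ⟨n, exists_eventually_le_measure_succ hB hp (hQ.1 i l) hl
    (exists_eventually_le_measure_of_pow_ne_zero hB hp hQ n l s0 hn.ne')⟩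

end Reach

theorem exists_forall_le_lt_one_of_finite {ι : Type*} [Finite ι] {f : ι → ℕ → ℝ≥0∞}
    (hf : ∀ i, Antitone (f i)) (h : ∀ i, ∃ k, f i k < 1) :
    ∃ k, ∃ a < 1, ∀ i, f i k ≤ a := by
  choose k hk using h
  have : Nonempty (Iio (1 : ℝ≥0∞)) := ⟨⟨0, mem_Iio.mpr zero_lt_one⟩⟩
  obtain ⟨⟨K, a⟩, hK⟩ :=
    Finite.exists_le fun i => ((k i, ⟨f i (k i), hk i⟩) : ℕ × Iio (1 : ℝ≥0∞))
  exact ⟨K, a, a.2, fun i => (hf i (hK i).1).trans (hK i).2⟩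

theorem exists_forall_le_lt_one_of_cofinite {ι : Type*} {f : ι → ℕ → ℝ≥0∞}
    (hf : ∀ i, Antitone (f i)) (h : ∀ i, ∃ k, f i k < 1)
    (hcof : ∃ k, ∃ a < 1, ∀ᶠ i in cofinite, f i k ≤ a) :
    ∃ k, ∃ a < 1, ∀ i, f i k ≤ a := by
  obtain ⟨k₀, a₀, ha₀, hev⟩ := hcof
  have : Finite {i | ¬f i k₀ ≤ a₀} := (eventually_cofinite.mp hev).to_subtype
  obtain ⟨k₁, a₁, ha₁, h₁⟩ := exists_forall_le_lt_one_of_finite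
    (f := fun i : {i | ¬f i k₀ ≤ a₀} => f i) (fun i => hf i) (fun i => h i)
  refine ⟨max k₀ k₁, max a₀ a₁, max_lt ha₀ ha₁, fun i => ?_⟩
  by_cases hi : f i k₀ ≤ a₀
  · exact (hf i (le_max_left _ _)).trans (hi.trans (le_max_left _ _))
  · exact (hf i (le_max_right _ _)).trans ((h₁ ⟨i, hi⟩).trans (le_max_right _ _))

theorem pow_div_le_inv_mul_exp {b : ℝ} (hb0 : 0 < b) (hb1 : b ≤ 1) (k r : ℕ) :
    b ^ (r / k) ≤ b⁻¹ * Real.exp (Real.log b / k * r) := by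
  have hdiv : (r : ℝ) / k - 1 ≤ ((r / k : ℕ) : ℝ) := by
    have := Nat.sub_one_lt_floor ((r : ℝ) / k)
    rw [Nat.floor_div_eq_div] at this
    exact this.le
  calc b ^ (r / k) = Real.exp ((r / k : ℕ) * Real.log b) := by
        rw [Real.exp_nat_mul, Real.exp_log hb0]
    _ ≤ Real.exp (((r : ℝ) / k - 1) * Real.log b) :=
        Real.exp_le_exp.mpr (mul_le_mul_of_nonpos_right hdiv (Real.log_nonpos hb0.le hb1))
    _ = b⁻¹ * Real.exp (Real.log b / k * r) := by
        rw [show ((r : ℝ) / k - 1) * Real.log b = -Real.log b + Real.log b / k * r by ring,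
          Real.exp_add, Real.exp_neg, Real.exp_log hb0]

theorem exists_exp_bound_of_geometric {ι : Type*} {u : ι → ℕ → ℝ≥0∞}
    (hu : ∀ i, Antitone (u i)) {k : ℕ} (hk : 0 < k) {a : ℝ≥0∞} (ha : a < 1)
    (h : ∀ i j, u i (j * k) ≤ a ^ j) :
    ∃ cr C : ℝ, 0 < cr ∧ 0 ≤ C ∧
      ∀ i (r : ℕ), u i r ≤ ENNReal.ofReal (C * Real.exp (-cr * r)) := by
  -- `b > 0` keeps `Real.log b` meaningful when `a = 0`.
  set b := max a.toReal (1 / 2)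
  have hb0 : 0 < b := lt_max_of_lt_right (by norm_num)
  have hb1 : b < 1 := max_lt (ENNReal.toReal_lt_of_lt_ofReal (by simpa using ha)) (by norm_num)
  have hab : a ≤ ENNReal.ofReal b :=
    (ENNReal.le_ofReal_iff_toReal_le ha.ne_top hb0.le).mpr (le_max_left _ _)
  refine ⟨-Real.log b / k, b⁻¹, div_pos (neg_pos.mpr (Real.log_neg hb0 hb1)) (by positivity),
    by positivity, fun i r => ?_⟩
  calc u i r ≤ u i (r / k * k) := hu i (Nat.div_mul_le_self r k)
    _ ≤ a ^ (r / k) := h i (r / k)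
    _ ≤ ENNReal.ofReal (b ^ (r / k)) := by rw [ENNReal.ofReal_pow hb0.le]; gcongr
    _ ≤ ENNReal.ofReal (b⁻¹ * Real.exp (-(-Real.log b / k) * r)) := by
        rw [neg_div, neg_neg]
        exact ENNReal.ofReal_le_ofReal (pow_div_le_inv_mul_exp hb0 hb1.le k r)

section Visits

def noVisit {S : Type*} (s0 : S) (r : ℕ) : Set (ℕ → ℕ × S) :=
  {ω | ∀ n, 1 ≤ n → n ≤ r → (ω n).2 ≠ s0}

theorem noVisit_antitone {S : Type*} (s0 : S) : Antitone (noVisit s0) :=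
  fun _ _ hkk _ hω n h1 h2 => hω n h1 (h2.trans hkk)

theorem determinedUpTo_noVisit {S : Type*} (s0 : S) (r : ℕ) : DeterminedUpTo r (noVisit s0 r) :=
  fun _ _ h hω n h1 h2 => h n h2 ▸ hω n h1 h2

theorem antitone_measure_noVisit {S : Type*} [MeasurableSpace S] (X : MChain (ℕ × S)) (s0 : S)
    (z : ℕ × S) : Antitone fun k => X.P z (noVisit s0 k) :=
  fun _ _ hkk => measure_mono (noVisit_antitone s0 hkk)

variable {S : Type*} [MeasurableSpace S] [MeasurableSingletonClass S] {X : MChain (ℕ × S)}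

theorem measurableSet_noVisit [Countable S] (s0 : S) (r : ℕ) : MeasurableSet (noVisit s0 r) :=
  (determinedUpTo_noVisit s0 r).measurableSet

theorem measure_noVisit_le_one_sub {s0 : S} {m k : ℕ} (hm : 1 ≤ m) (hmk : m ≤ k)
    (z : ℕ × S) :
    X.P z (noVisit s0 k) ≤ 1 - X.P z {ω | (ω m).2 = s0} := by
  have := X.isProb z
  rw [← prob_compl_eq_one_sub (measurableSet_snd_eq m s0)]
  exact measure_mono fun ω hω h => hω m hm hmk h

theorem exists_measure_noVisit_lt_one (hirr : X.Irreducible) (s0 : S) (z : ℕ × S) :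
    ∃ k, X.P z (noVisit s0 k) < 1 := by
  obtain ⟨n, hn⟩ := hirr z (z.1 + 1, s0)
  have hn0 : n ≠ 0 := by
    rintro rfl
    have h0 : X.P z {ω | ¬ω 0 = z} = 0 := ae_iff.mp (X.ae_eq_init z)
    refine hn (measure_mono_null ?_ h0)
    rintro ω (hω : ω 0 = _) (h : ω 0 = z)
    simpa using congrArg Prod.fst (h.symm.trans hω)
  refine ⟨n, (measure_noVisit_le_one_sub (Nat.one_le_iff_ne_zero.mpr hn0) le_rfl z).trans_lt
    (ENNReal.sub_lt_self ENNReal.one_ne_top one_ne_zero fun h0 => hn ?_)⟩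
  exact measure_mono_null (fun ω (hω : ω n = _) => by simp [hω]) h0

theorem exists_eventually_measure_noVisit_le [Fintype S] [DecidableEq S] {p : ℝ}
    (hB : CondB X p) (hp : 0 < p) {Q : S → S → ℝ} (hQ : CondQ X Q) (s0 i : S) :
    ∃ k, ∃ a < 1, ∀ᶠ x in atTop, X.P (x, i) (noVisit s0 k) ≤ a := by
  obtain ⟨m, c, hc, hev⟩ := exists_eventually_le_measure_hit hB hp hQ i s0
  exact ⟨m + 1, 1 - c, ENNReal.sub_lt_self ENNReal.one_ne_top one_ne_zero hc,
    hev.mono fun x hx => (measure_noVisit_le_one_sub le_add_self le_rfl _).trans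
      (tsub_le_tsub_left hx 1)⟩

theorem exists_forall_measure_noVisit_le [Fintype S] [DecidableEq S] (hirr : X.Irreducible)
    {p : ℝ} (hB : CondB X p) (hp : 0 < p) {Q : S → S → ℝ} (hQ : CondQ X Q) (s0 : S) :
    ∃ k, 0 < k ∧ ∃ a < 1, ∀ z, X.P z (noVisit s0 k) ≤ a := by
  have hrow : ∀ i, ∃ k, ∃ a < 1, ∀ x, X.P (x, i) (noVisit s0 k) ≤ a := fun i =>
    exists_forall_le_lt_one_of_cofinite (fun x => antitone_measure_noVisit X s0 (x, i))
      (fun x => exists_measure_noVisit_lt_one hirr s0 (x, i))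
      (Nat.cofinite_eq_atTop ▸ exists_eventually_measure_noVisit_le hB hp hQ s0 i)
  obtain ⟨k, a, ha, h⟩ := exists_forall_le_lt_one_of_finite
    (f := fun i k => ⨆ x, X.P (x, i) (noVisit s0 k))
    (fun i _ _ hkk => iSup_mono fun x => antitone_measure_noVisit X s0 (x, i) hkk)
    (fun i => let ⟨k, a, ha, h⟩ := hrow i; ⟨k, (iSup_le h).trans_lt ha⟩)
  have hbound : ∀ z, X.P z (noVisit s0 k) ≤ a := fun ⟨x, i⟩ =>
    (le_iSup (fun x => X.P (x, i) (noVisit s0 k)) x).trans (h i)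
  refine ⟨k, Nat.pos_of_ne_zero fun hk => ?_, a, ha, hbound⟩
  have := X.isProb (0, s0)
  have huniv : X.P (0, s0) univ ≤ X.P (0, s0) (noVisit s0 k) :=
    measure_mono fun ω _ n h1 h2 => absurd (h2.trans_eq hk) (by omega)
  exact (measure_univ.symm.le.trans (huniv.trans (hbound _))).not_gt ha

theorem measure_noVisit_mul_le [Countable S] {s0 : S} {k : ℕ} {a : ℝ≥0∞}
    (h : ∀ z, X.P z (noVisit s0 k) ≤ a) (z : ℕ × S) (j : ℕ) :
    X.P z (noVisit s0 (j * k)) ≤ a ^ j := by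
  induction j with
  | zero => have := X.isProb z; simpa using prob_le_one
  | succ j ih =>
    have hsplit : noVisit s0 ((j + 1) * k) ⊆ noVisit s0 (j * k) ∩ {ω | ω (j * k) ∈ univ}
        ∩ {ω | (fun m => ω (j * k + m)) ∈ noVisit s0 k} := by
      intro ω hω
      refine ⟨⟨noVisit_antitone s0 (Nat.mul_le_mul_right k (Nat.le_succ j)) hω, trivial⟩,
        fun m h1 h2 => hω (j * k + m) (by omega) (by rw [Nat.succ_mul]; omega)⟩
    calc X.P z (noVisit s0 ((j + 1) * k))
        ≤ a * X.P z (noVisit s0 (j * k) ∩ {ω | ω (j * k) ∈ univ}) :=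
          (measure_mono hsplit).trans (X.measure_inter_shift_le z
            (determinedUpTo_noVisit s0 _) univ (measurableSet_noVisit s0 k) fun w _ => h w)
      _ ≤ a * a ^ j := by gcongr; simpa using ih
      _ = a ^ (j + 1) := (pow_succ' a j).symm

theorem ae_infinite_visits [Countable S] {s0 : S} {k : ℕ} {a : ℝ≥0∞} (ha : a < 1)
    (h : ∀ z j, X.P z (noVisit s0 (j * k)) ≤ a ^ j) (z : ℕ × S) :
    ∀ᵐ ω ∂X.P z, {m | (ω m).2 = s0}.Infinite := by
  rw [ae_iff]
  refine measure_mono_null (t := ⋃ t, ⋂ j, {ω | (fun m => ω (t + m)) ∈ noVisit s0 (j * k)})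
    ?_ (measure_iUnion_null fun t => ?_)
  · intro ω hω
    have hfin : ¬{m | (ω m).2 = s0}.Infinite := hω
    rw [← Nat.frequently_atTop_iff_infinite, not_frequently, eventually_atTop] at hfin
    obtain ⟨t, ht⟩ := hfin
    exact mem_iUnion.mpr ⟨t, mem_iInter.mpr fun j m h1 _ => ht (t + m) (by omega)⟩
  · refine le_antisymm (ge_of_tendsto' (ENNReal.tendsto_pow_atTop_nhds_zero_of_lt_one ha)
      fun j => ?_) bot_le
    exact (measure_mono (iInter_subset _ j)).trans
      (X.measure_shift_le z t (measurableSet_noVisit s0 _) fun w => h w j)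

end Visits

section Excursions

theorem tauSeq_eq_nth {S : Type*} {s0 : S} {ω : ℕ → ℕ × S}
    (h : {m | (ω m).2 = s0}.Infinite) :
    ∀ n, tauSeq s0 ω n = Nat.nth (fun m => (ω m).2 = s0) n
  | 0 => Nat.nth_zero.symm
  | n + 1 => by
    rw [tauSeq, tauSeq_eq_nth h n]
    refine IsLeast.csInf_eq ⟨⟨(Nat.nth_lt_nth h).2 n.lt_succ_self,
      Nat.nth_mem_of_infinite h _⟩, fun m ⟨hlt, hm⟩ => ?_⟩
    by_contra! hm'
    exact (Nat.le_nth_of_lt_nth_succ hm' hm).not_gt hlt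

variable {S : Type*} [DecidableEq S]

/-- Visits are counted from `0`, as in `tauSeq`: on trajectories with infinitely many visits
this is the event `τ_n = t`. -/
def nthVisitAt (s0 : S) (n t : ℕ) : Set (ℕ → ℕ × S) :=
  {ω | (ω t).2 = s0 ∧ Nat.count (fun m => (ω m).2 = s0) t = n}

theorem nth_eq_of_mem_nthVisitAt {s0 : S} {n t : ℕ} {ω : ℕ → ℕ × S}
    (h : ω ∈ nthVisitAt s0 n t) :
    Nat.nth (fun m => (ω m).2 = s0) n = t :=
  h.2 ▸ Nat.nth_count h.1

theorem determinedUpTo_nthVisitAt (s0 : S) (n t : ℕ) : DeterminedUpTo t (nthVisitAt s0 n t) := by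
  rintro ω ω' h ⟨hs, hc⟩
  refine ⟨h t le_rfl ▸ hs, ?_⟩
  rw [← hc, Nat.count_eq_card_filter_range, Nat.count_eq_card_filter_range]
  congr 1
  refine Finset.filter_congr fun m hm => ?_
  rw [h m (Finset.mem_range.mp hm).le]

variable [MeasurableSpace S] [MeasurableSingletonClass S] [Countable S] {X : MChain (ℕ × S)}

theorem measure_excursion_gt_inter_le {s0 : S} {r : ℕ} {b : ℝ≥0∞} (z : ℕ × S)
    (hinf : ∀ᵐ ω ∂X.P z, {m | (ω m).2 = s0}.Infinite)
    (hb : ∀ w, X.P w (noVisit s0 r) ≤ b) (n x : ℕ) :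
    X.P z ({ω | r < tauSeq s0 ω (n + 1) - tauSeq s0 ω n} ∩ {ω | (ω (tauSeq s0 ω n)).1 = x})
      ≤ b * X.P z {ω | (ω (tauSeq s0 ω n)).1 = x} := by
  set D : ℕ → Set (ℕ → ℕ × S) := fun t =>
    nthVisitAt s0 n t ∩ {ω | ω t ∈ {w | w.1 = x}}
  have hD : ∀ t, MeasurableSet (D t) := fun t =>
    (determinedUpTo_nthVisitAt s0 n t).measurableSet.inter
      ((measurableSet_singleton x).preimage (measurable_fst.comp (measurable_pi_apply t)))
  have hdisj : Pairwise (Function.onFun Disjoint D) := fun t t' htt' => disjoint_left.mpr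
    fun ω h h' => htt' ((nth_eq_of_mem_nthVisitAt h.1).symm.trans (nth_eq_of_mem_nthVisitAt h'.1))
  calc X.P z ({ω | r < tauSeq s0 ω (n + 1) - tauSeq s0 ω n}
          ∩ {ω | (ω (tauSeq s0 ω n)).1 = x})
      ≤ X.P z (⋃ t, D t ∩ {ω | (fun m => ω (t + m)) ∈ noVisit s0 r}) := by
        refine measure_mono_ae (hinf.mono fun ω hω hmem => ?_)
        obtain ⟨hlong, hx⟩ : r < tauSeq s0 ω (n + 1) - tauSeq s0 ω n
            ∧ (ω (tauSeq s0 ω n)).1 = x := hmem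
        simp only [tauSeq_eq_nth hω] at hlong hx
        refine mem_iUnion.mpr ⟨_, ⟨⟨Nat.nth_mem_of_infinite hω n,
          Nat.count_nth_of_infinite hω n⟩, hx⟩, fun m h1 h2 hm => ?_⟩
        exact (Nat.le_nth_of_lt_nth_succ (p := fun m => (ω m).2 = s0) (k := n)
          (a := Nat.nth _ n + m) (by omega) hm).not_gt (by omega)
    _ ≤ ∑' t, X.P z (D t ∩ {ω | (fun m => ω (t + m)) ∈ noVisit s0 r}) :=
        measure_iUnion_le _
    _ ≤ ∑' t, b * X.P z (D t) := ENNReal.tsum_le_tsum fun t =>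
        X.measure_inter_shift_le z (determinedUpTo_nthVisitAt s0 n t) _
          (measurableSet_noVisit s0 r) fun w _ => hb w
    _ = b * X.P z (⋃ t, D t) := by rw [ENNReal.tsum_mul_left, measure_iUnion hdisj hD]
    _ ≤ b * X.P z {ω | (ω (tauSeq s0 ω n)).1 = x} := by
        refine mul_le_mul_right (measure_mono_ae (hinf.mono fun ω hω hD => ?_)) b
        obtain ⟨t, hvisit, hx⟩ := mem_iUnion.mp hD
        show (ω (tauSeq s0 ω n)).1 = x
        rwa [tauSeq_eq_nth hω, nth_eq_of_mem_nthVisitAt hvisit]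

end Excursions

variable {S : Type*} [Fintype S] [DecidableEq S] [Nonempty S]
  [MeasurableSpace S] [MeasurableSingletonClass S]

theorem stmt9_general (X : MChain (ℕ × S)) (hirr : X.Irreducible) (s0 : S)
    (p : ℝ) (hp : 1 < p) (hB : CondB X p)
    (Q : S → S → ℝ) (hQ : CondQ X Q) :
    ∃ (cr C : ℝ), 0 < cr ∧ 0 ≤ C ∧
      (∀ (z : ℕ × S) (n x r : ℕ),
        X.P z ({ω | r < tauSeq s0 ω (n + 1) - tauSeq s0 ω n}
            ∩ {ω | (ω (tauSeq s0 ω n)).1 = x})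
          ≤ ENNReal.ofReal (C * Real.exp (-cr * r)) *
              X.P z {ω | (ω (tauSeq s0 ω n)).1 = x}) ∧
      (∀ (x : ℕ) (i : S) (r : ℕ),
        X.P (x, i) {ω | ∀ n, 1 ≤ n → n ≤ r → (ω n).2 ≠ s0}
          ≤ ENNReal.ofReal (C * Real.exp (-cr * r))) := by
  obtain ⟨k, hk, a, ha, hbound⟩ :=
    exists_forall_measure_noVisit_le hirr hB (by linarith) hQ s0
  have hgeom := measure_noVisit_mul_le hbound
  obtain ⟨cr, C, hcr, hC, hexp⟩ :=
    exists_exp_bound_of_geometric (antitone_measure_noVisit X s0) hk ha hgeom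
  exact ⟨cr, C, hcr, hC,
    fun z n x r => measure_excursion_gt_inter_le z (ae_infinite_visits ha hgeom z)
      (fun w => hexp w r) n x,
    fun x i r => hexp (x, i) r⟩

/-- Lemma (excursion duration tails): under (B_p) for some `p > 1` and (Q_∞), the excursion
durations `τ_{n+1} − τ_n`, conditionally on `X_{τ_n} = x`, have uniformly exponential tails;
moreover `P_{x,i}[τ > r] ≤ C e^{−cr}` uniformly in `x` and `i`. -/
theorem stmt9 (X : MChain (ℕ × S)) (hirr : X.Irreducible) (s0 : S)
    (p : ℝ) (hp : 1 < p) (hB : CondB X p)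
    (Q : S → S → ℝ) (pst : S → ℝ) (hQ : CondQ X Q) (hpst : IsStationaryDist Q pst) :
    ∃ (cr C : ℝ), 0 < cr ∧ 0 ≤ C ∧
      (∀ (z : ℕ × S) (n x r : ℕ),
        X.P z ({ω | r < tauSeq s0 ω (n + 1) - tauSeq s0 ω n}
            ∩ {ω | (ω (tauSeq s0 ω n)).1 = x})
          ≤ ENNReal.ofReal (C * Real.exp (-cr * r)) *
              X.P z {ω | (ω (tauSeq s0 ω n)).1 = x}) ∧
      (∀ (x : ℕ) (i : S) (r : ℕ),
        X.P (x, i) {ω | ∀ n, 1 ≤ n → n ≤ r → (ω n).2 ≠ s0}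
          ≤ ENNReal.ofReal (C * Real.exp (-cr * r))) :=
  stmt9_general X hirr s0 p hp hB Q hQ
end
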